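/- arXiv:2007.15257 — 3 statements merged into one kernel-verified Lean document; each statement's English description precedes it below -/
import Mathlib

section
/- Let Γ be a smooth closed surface in ℝ³ with outward unit normal ν, extended Weingarten map A = ∇_Γ ν (a symmetric matrix field with Aν = 0), and mean curvature H = trace(A). Then for any smooth function f on Γ, the componentwise Laplace–Beltrami operator satisfies the commutator formula Δ_Γ ∇_Γ f − ∇_Γ Δ_Γ f = (H A − A²) ∇_Γ f + (Δ_Γ ν · ∇_Γ f) ν − 2 (∇_Γ · (A ∇_Γ f)) ν − A² ∇_Γ f. -/
/-!
Write `g = ∇_Γ f` and `A = (D_i ν_j)`. Since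
`Δ_Γ D_j − D_j Δ_Γ = ∑_i (D_i [D_i, D_j] + [D_i, D_j] D_i)`, the commutator relation is applied
once to `f` and once to each `D_i f`. The resulting terms are evaluated with the tangency
`ν · ∇_Γ u = 0`, its derivative `ν · D_k ∇_Γ u = −(A ∇_Γ u)_k`, and the symmetry of `A`, which
lets the second-order term `∑ A_ik D_k D_i f` be recognised as `∇_Γ · (A g) − Δ_Γ ν · g`.

The `D_i` are treated as derivations of the commutative ring of functions on `Γ`, so the
computation takes place in an arbitrary commutative ring.
-/

open Finset Matrix

section Leibniz

theorem Derivation.leibniz_mul {R A : Type*} [CommSemiring R] [CommSemiring A] [Algebra R A]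
    (d : Derivation R A A) (a b : A) : d (a * b) = d a * b + a * d b := by
  rw [d.leibniz, smul_eq_mul, smul_eq_mul]
  ring

variable {R : Type*} [CommRing R]

def Derivation.ofLeibniz (d : R → R) (hadd : ∀ a b, d (a + b) = d a + d b)
    (hmul : ∀ a b, d (a * b) = d a * b + a * d b) : Derivation ℤ R R :=
  Derivation.mk' (AddMonoidHom.mk' d hadd).toIntLinearMap fun a b => by
    simp [hmul, add_comm, mul_comm]

@[simp]
theorem Derivation.coe_ofLeibniz (d : R → R) (hadd) (hmul) :
    ⇑(Derivation.ofLeibniz d hadd hmul) = d :=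
  rfl

end Leibniz

namespace TangentialCalculus

variable {R ι : Type*} [CommRing R] [Fintype ι] (D : ι → Derivation ℤ R R)

def laplace (u : R) : R := ∑ i, D i (D i u)

def grad (u : R) : ι → R := fun i => D i u

def divergence (v : ι → R) : R := ∑ i, D i (v i)

def weingarten (ν : ι → R) : Matrix ι ι R := Matrix.of fun i j => D i (ν j)

theorem laplace_comp_sub_comp_laplace (j : ι) (u : R) :
    laplace D (D j u) - D j (laplace D u)
      = ∑ i, (D i (D i (D j u) - D j (D i u)) + (D i (D j (D i u)) - D j (D i (D i u)))) := by
  rw [laplace, laplace, map_sum, ← sum_sub_distrib]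
  refine sum_congr rfl fun i _ => ?_
  rw [map_sub]
  abel

variable {D} {ν : ι → R}

theorem sum_mul_comp_eq_neg_weingarten_mulVec_grad (htang : ∀ u, ∑ i, ν i * D i u = 0)
    (k : ι) (u : R) : ∑ i, ν i * D k (D i u) = -(weingarten D ν *ᵥ grad D u) k := by
  have h := congrArg (D k) (htang u)
  simp only [map_sum, map_zero, Derivation.leibniz_mul, sum_add_distrib] at h
  simp only [mulVec, dotProduct, weingarten, grad, of_apply]
  linear_combination h

variable (D ν) in
theorem divergence_weingarten_mulVec_grad (f : R) :
    divergence D (weingarten D ν *ᵥ grad D f)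
      = (fun k => laplace D (ν k)) ⬝ᵥ grad D f + ∑ i, ∑ k, D i (ν k) * D i (D k f) := by
  simp only [divergence, mulVec, dotProduct, weingarten, grad, of_apply, laplace, map_sum,
    Derivation.leibniz_mul, sum_add_distrib, sum_mul]
  rw [sum_comm]

theorem sum_comp_mul_sub_mul_eq (htang : ∀ u, ∑ i, ν i * D i u = 0)
    (hsymm : ∀ i j, D i (ν j) = D j (ν i)) (v : ι → R) (j : ι) :
    ∑ i, D i (v j * ν i - v i * ν j)
      = (weingarten D ν).trace * v j - divergence D v * ν j - (weingarten D ν *ᵥ v) j := by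
  have hν : ∑ i, D i (v j) * ν i = 0 := by simpa only [mul_comm] using htang (v j)
  simp only [map_sub, Derivation.leibniz_mul, sum_sub_distrib, sum_add_distrib, hν, ← mul_sum]
  simp only [trace, Matrix.diag, weingarten, of_apply, divergence, mulVec, dotProduct, hsymm j,
    sum_mul, mul_comm (v _)]
  ring

theorem sum_weingarten_mulVec_grad_comp_mul (htang : ∀ u, ∑ i, ν i * D i u = 0) (f : R)
    (j : ι) : ∑ i, (weingarten D ν *ᵥ grad D (D i f)) j * ν i
      = -(weingarten D ν *ᵥ (weingarten D ν *ᵥ grad D f)) j := by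
  simp only [mulVec, dotProduct, weingarten, grad, of_apply, sum_mul]
  rw [sum_comm]
  simp only [mul_assoc, ← mul_sum, mul_comm (D _ (D _ f)) (ν _),
    sum_mul_comp_eq_neg_weingarten_mulVec_grad htang]
  simp [mulVec, dotProduct, weingarten, grad]

theorem sum_weingarten_mulVec_grad_comp_self (hsymm : ∀ i j, D i (ν j) = D j (ν i)) (f : R) :
    ∑ i, (weingarten D ν *ᵥ grad D (D i f)) i
      = divergence D (weingarten D ν *ᵥ grad D f) - (fun k => laplace D (ν k)) ⬝ᵥ grad D f := by
  rw [divergence_weingarten_mulVec_grad, add_sub_cancel_left, sum_comm]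
  simp only [mulVec, dotProduct, weingarten, grad, of_apply, hsymm]

theorem laplace_grad_sub_grad_laplace
    (hcomm : ∀ i j u, D i (D j u) - D j (D i u)
      = (weingarten D ν *ᵥ grad D u) j * ν i - (weingarten D ν *ᵥ grad D u) i * ν j)
    (hsymm : ∀ i j, D i (ν j) = D j (ν i)) (htang : ∀ u, ∑ i, ν i * D i u = 0) (f : R) (j : ι) :
    laplace D (D j f) - D j (laplace D f)
      = (((weingarten D ν).trace • weingarten D ν - weingarten D ν * weingarten D ν)
            *ᵥ grad D f) j
        + ((fun k => laplace D (ν k)) ⬝ᵥ grad D f) * ν j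
        - 2 * divergence D (weingarten D ν *ᵥ grad D f) * ν j
        - ((weingarten D ν * weingarten D ν) *ᵥ grad D f) j := by
  rw [laplace_comp_sub_comp_laplace]
  simp only [hcomm, sum_add_distrib, sum_comp_mul_sub_mul_eq htang hsymm, sum_sub_distrib,
    sum_weingarten_mulVec_grad_comp_mul htang, ← sum_mul,
    sum_weingarten_mulVec_grad_comp_self hsymm]
  simp only [sub_mulVec, smul_mulVec, mulVec_mulVec, Pi.sub_apply, Pi.smul_apply, smul_eq_mul]
  ring

end TangentialCalculus

open TangentialCalculus

theorem commutator_gradient_laplace_general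
    {Γ : Type*}
    (D : Fin 3 → (Γ → ℝ) → (Γ → ℝ))
    (ν : Fin 3 → Γ → ℝ) (f : Γ → ℝ)
    (hadd : ∀ i (u v : Γ → ℝ), D i (u + v) = D i u + D i v)
    (hmul : ∀ i (u v : Γ → ℝ), D i (u * v) = D i u * v + u * D i v)
    (hcomm : ∀ i j (u : Γ → ℝ) (x : Γ),
      D i (D j u) x - D j (D i u) x
        = (∑ k, D j (ν k) x * D k u x) * ν i x - (∑ k, D i (ν k) x * D k u x) * ν j x)
    (hsymm : ∀ i j, D i (ν j) = D j (ν i))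
    (htang : ∀ (u : Γ → ℝ) (x : Γ), ∑ i, ν i x * D i u x = 0) :
    ∀ j (x : Γ),
      (∑ i, D i (D i (D j f)) x) - D j (fun y => ∑ i, D i (D i f) y) x
        = (∑ k, ((∑ i, D i (ν i) x) * D j (ν k) x
              - ∑ l, D j (ν l) x * D l (ν k) x) * D k f x)
          + (∑ k, (∑ i, D i (D i (ν k)) x) * D k f x) * ν j x
          - 2 * (∑ i, D i (fun y => ∑ k, D i (ν k) y * D k f y) x) * ν j x
          - ∑ k, (∑ l, D j (ν l) x * D l (ν k) x) * D k f x := by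
  intro j x
  let Dd i := Derivation.ofLeibniz (D i) (hadd i) (hmul i)
  have key := congrFun (laplace_grad_sub_grad_laplace (D := Dd) (ν := ν)
    (fun i j u => funext fun y => by
      simpa [Dd, mulVec, dotProduct, weingarten, grad, Finset.sum_apply] using hcomm i j u y)
    hsymm (fun u => funext fun y => by simpa [Dd, Finset.sum_apply] using htang u y) f j) x
  simp only [Dd, Derivation.coe_ofLeibniz, laplace, divergence, weingarten, grad, mulVec,
    dotProduct, Matrix.mul_apply, trace, Matrix.diag, of_apply, Matrix.sub_apply,
    Matrix.smul_apply, smul_eq_mul, Finset.sum_apply, Pi.sub_apply, Pi.add_apply,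
    Pi.mul_apply] at key
  simp only [← Finset.sum_fn]
  exact key

/-- **Commutator formula, Lemma 2.2.** On a smooth closed surface `Γ ⊂ ℝ³` with
outward unit normal `ν`, extended Weingarten map `A = ∇_Γ ν` (symmetric, `Aν = 0`), and mean
curvature `H = tr A`, the componentwise tangential derivatives `D i` (satisfying the Leibniz
rule, additivity, the tangential commutator relation
`D_i D_j u − D_j D_i u = A_{jk} D_k u ν_i − A_{ik} D_k u ν_j`, tangency `ν · ∇_Γ u = 0`,
and `|ν| = 1`) satisfy, for any smooth `f : Γ → ℝ`,
`Δ_Γ ∇_Γ f − ∇_Γ Δ_Γ f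
  = (H A − A²) ∇_Γ f + (Δ_Γ ν · ∇_Γ f) ν − 2 (∇_Γ · (A ∇_Γ f)) ν − A² ∇_Γ f`
componentwise, where `Δ_Γ u = ∑ i, D i (D i u)`, `A i j = D i (ν j)`, `H = ∑ i, A i i`. -/
theorem commutator_gradient_laplace
    {Γ : Type*}
    (D : Fin 3 → (Γ → ℝ) → (Γ → ℝ))
    (ν : Fin 3 → Γ → ℝ) (f : Γ → ℝ)
    (hadd : ∀ i (u v : Γ → ℝ), D i (u + v) = D i u + D i v)
    (hmul : ∀ i (u v : Γ → ℝ), D i (u * v) = D i u * v + u * D i v)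
    (hcomm : ∀ i j (u : Γ → ℝ) (x : Γ),
      D i (D j u) x - D j (D i u) x
        = (∑ k, D j (ν k) x * D k u x) * ν i x - (∑ k, D i (ν k) x * D k u x) * ν j x)
    (hsymm : ∀ i j, D i (ν j) = D j (ν i))
    (hunit : ∀ x, ∑ i, ν i x * ν i x = 1)
    (hAν : ∀ i (x : Γ), ∑ j, D i (ν j) x * ν j x = 0)
    (htang : ∀ (u : Γ → ℝ) (x : Γ), ∑ i, ν i x * D i u x = 0) :
    ∀ j (x : Γ),
      (∑ i, D i (D i (D j f)) x) - D j (fun y => ∑ i, D i (D i f) y) x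
        = (∑ k, ((∑ i, D i (ν i) x) * D j (ν k) x
              - ∑ l, D j (ν l) x * D l (ν k) x) * D k f x)
          + (∑ k, (∑ i, D i (D i (ν k)) x) * D k f x) * ν j x
          - 2 * (∑ i, D i (fun y => ∑ k, D i (ν k) y * D k f y) x) * ν j x
          - ∑ k, (∑ l, D j (ν l) x * D l (ν k) x) * D k f x :=
  commutator_gradient_laplace_general D ν f hadd hmul hcomm hsymm htang
end

section
/- Let s, t ∈ [0,T] and let M(t) be a differentiable matrix family with wᵀṀ(t)z ≤ C‖w‖_{M(t)}‖z‖_{M(t)}. Then for K|t−s| ≤ 1/4 one has wᵀ(M(t)−M(s))z ≤ C'|t−s| ‖w‖_{M(t)}‖z‖_{M(t)} for a constant C' depending only on C and the norm equivalence constant on [s,t]. -/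
open Matrix

/-- Let `f : [0,T] → ℝ` be continuously differentiable with
`|f'(t)| ≤ C g(t) h(t)` for continuous nonnegative `g, h`, and let `s, t ∈ [0,T]`.
If additionally a matrix family `M(r)` is differentiable (entrywise derivative `M'`) with
`wᵀ Ṁ(r) z ≤ C ‖w‖_{M(r)} ‖z‖_{M(r)}`, `M(r)` symmetric positive semidefinite, and the norms
`‖·‖_{M(r)}` for `r` between `s` and `t` are equivalent to `‖·‖_{M(t)}` with a uniform
constant `c`, then for `K|t−s| ≤ 1/4` one has
`wᵀ(M(t)−M(s))z ≤ C' |t−s| ‖w‖_{M(t)} ‖z‖_{M(t)}`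
for a constant `C'` depending only on `C` and the norm equivalence constant. -/
theorem matrix_finite_difference_bound
    {N : ℕ} (T C K c : ℝ) (hC : 0 ≤ C) (hc : 1 ≤ c) (hK : 0 ≤ K)
    (f f' g h : ℝ → ℝ)
    (hf : ∀ r ∈ Set.Icc (0 : ℝ) T, HasDerivAt f (f' r) r)
    (hg : ContinuousOn g (Set.Icc 0 T)) (hh : ContinuousOn h (Set.Icc 0 T))
    (hgpos : ∀ r ∈ Set.Icc (0 : ℝ) T, 0 ≤ g r) (hhpos : ∀ r ∈ Set.Icc (0 : ℝ) T, 0 ≤ h r)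
    (hfb : ∀ r ∈ Set.Icc (0 : ℝ) T, |f' r| ≤ C * g r * h r)
    (s t : ℝ) (hs : s ∈ Set.Icc (0 : ℝ) T) (ht : t ∈ Set.Icc (0 : ℝ) T)
    (hKst : K * |t - s| ≤ 1 / 4)
    (M M' : ℝ → Matrix (Fin N) (Fin N) ℝ)
    (hderiv : ∀ r ∈ Set.uIcc s t, ∀ i j, HasDerivAt (fun ρ => M ρ i j) (M' r i j) r)
    (hPSD : ∀ r ∈ Set.uIcc s t, (M r).PosSemidef)
    (hM' : ∀ r ∈ Set.uIcc s t, ∀ w z : Fin N → ℝ,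
      w ⬝ᵥ (M' r).mulVec z
        ≤ C * Real.sqrt (w ⬝ᵥ (M r).mulVec w) * Real.sqrt (z ⬝ᵥ (M r).mulVec z))
    (hequiv : ∀ r ∈ Set.uIcc s t, ∀ w : Fin N → ℝ,
      w ⬝ᵥ (M r).mulVec w ≤ c ^ 2 * (w ⬝ᵥ (M t).mulVec w)) :
    ∃ C' : ℝ, C' = C * c ^ 2 ∧ ∀ w z : Fin N → ℝ,
      w ⬝ᵥ (M t - M s).mulVec z
        ≤ C' * |t - s| * Real.sqrt (w ⬝ᵥ (M t).mulVec w)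
            * Real.sqrt (z ⬝ᵥ (M t).mulVec z) := by
  refine ⟨C * c ^ 2, rfl, fun w z => ?_⟩
  have hc0 : (0 : ℝ) ≤ c := le_trans zero_le_one hc
  set A := Real.sqrt (w ⬝ᵥ (M t).mulVec w) with hA
  set B := Real.sqrt (z ⬝ᵥ (M t).mulVec z) with hB
  have hA0 : 0 ≤ A := Real.sqrt_nonneg _
  have hB0 : 0 ≤ B := Real.sqrt_nonneg _
  -- norm equivalence in sqrt form
  have hsq : ∀ r ∈ Set.uIcc s t, ∀ v : Fin N → ℝ,
      Real.sqrt (v ⬝ᵥ (M r).mulVec v) ≤ c * Real.sqrt (v ⬝ᵥ (M t).mulVec v) := by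
    intro r hr v
    calc Real.sqrt (v ⬝ᵥ (M r).mulVec v) ≤ Real.sqrt (c ^ 2 * (v ⬝ᵥ (M t).mulVec v)) :=
          Real.sqrt_le_sqrt (hequiv r hr v)
      _ = c * Real.sqrt (v ⬝ᵥ (M t).mulVec v) := by
          rw [Real.sqrt_mul (by positivity), Real.sqrt_sq hc0]
  -- the scalar function and its derivative
  set φ : ℝ → ℝ := fun r => w ⬝ᵥ (M r).mulVec z with hφ
  set φ' : ℝ → ℝ := fun r => w ⬝ᵥ (M' r).mulVec z with hφ'
  have hder : ∀ r ∈ Set.uIcc s t, HasDerivAt φ (φ' r) r := by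
    intro r hr
    have : HasDerivAt (fun ρ => ∑ i, w i * ∑ j, M ρ i j * z j)
        (∑ i, w i * ∑ j, M' r i j * z j) r := by
      refine HasDerivAt.fun_sum fun i _ => ?_
      exact (HasDerivAt.fun_sum fun j _ => (hderiv r hr i j).mul_const (z j)).const_mul (w i)
    simpa [hφ, hφ', dotProduct, Matrix.mulVec, Finset.mul_sum] using this
  -- bound the derivative
  have hbound : ∀ r ∈ Set.uIcc s t, ‖φ' r‖ ≤ C * c ^ 2 * A * B := by
    intro r hr
    have key : ∀ v : Fin N → ℝ,
        v ⬝ᵥ (M' r).mulVec z ≤ C * c ^ 2 * Real.sqrt (v ⬝ᵥ (M t).mulVec v) * B := by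
      intro v
      calc v ⬝ᵥ (M' r).mulVec z
          ≤ C * Real.sqrt (v ⬝ᵥ (M r).mulVec v) * Real.sqrt (z ⬝ᵥ (M r).mulVec z) :=
            hM' r hr v z
        _ ≤ C * (c * Real.sqrt (v ⬝ᵥ (M t).mulVec v)) * (c * B) := by
            apply mul_le_mul
            · exact mul_le_mul_of_nonneg_left (hsq r hr v) hC
            · exact hsq r hr z
            · exact Real.sqrt_nonneg _
            · positivity
        _ = C * c ^ 2 * Real.sqrt (v ⬝ᵥ (M t).mulVec v) * B := by ring
    rw [Real.norm_eq_abs, abs_le]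
    constructor
    · have := key (-w)
      have hneg : (-w) ⬝ᵥ (M' r).mulVec z = -(w ⬝ᵥ (M' r).mulVec z) := by
        simp [neg_dotProduct]
      have hnw : Real.sqrt ((-w) ⬝ᵥ (M t).mulVec (-w)) = A := by
        simp [hA, neg_dotProduct, Matrix.mulVec_neg]
      rw [hneg, hnw] at this
      linarith
    · simpa [hA] using key w
  -- mean value inequality
  have hmvt : ‖φ t - φ s‖ ≤ C * c ^ 2 * A * B * ‖t - s‖ := by
    refine Convex.norm_image_sub_le_of_norm_hasDerivWithin_le
      (fun r hr => (hder r hr).hasDerivWithinAt) hbound (convex_uIcc s t) ?_ ?_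
    · exact Set.left_mem_uIcc
    · exact Set.right_mem_uIcc
  have hfin : w ⬝ᵥ (M t - M s).mulVec z = φ t - φ s := by
    simp [hφ, Matrix.sub_mulVec, dotProduct_sub]
  rw [hfin]
  calc φ t - φ s ≤ ‖φ t - φ s‖ := le_abs_self _
    _ ≤ C * c ^ 2 * A * B * ‖t - s‖ := hmvt
    _ = C * c ^ 2 * |t - s| * A * B := by rw [Real.norm_eq_abs]; ring
end

section
/- (Product interpolation bound, discrete model) Let V ⊂ C(Ω) ∩ H¹(Ω) be a finite-dimensional space on a bounded domain Ω with interpolation operator I: C(Ω) → V satisfying ‖Iϕ − ϕ‖_{H¹(K)} ≤ c h^k ‖ϕ‖_{H^{k+1}(K)} on each element K, together with inverse estimates ‖∇^j v‖_{L²(K)} ≤ c h^{−j+1}‖∇ v‖_{L²(K)} for v ∈ V, j ≤ k+1. Then for all a, b ∈ V: ‖I(ab)‖_{H¹(Ω)} ≤ C ‖a‖_{H¹(Ω)} ‖b‖_{W^{1,∞}(Ω)} with C independent of h. -/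
/-!
Write `‖u‖_K = |u|_{H⁰(K)} + |u|_{H¹(K)}` and `x = h⁻¹`. The inverse estimates say that on each
element the `j`-th seminorms of `a` and of `b` are at most `γ ‖a‖_K x^(j-1)` and
`γ ‖b‖_{W^{1,∞}} x^(j-1)` (with `γ = max c 1` and truncated `j - 1`), so by the Leibniz rule
`|ab|_{H^j(K)} ≲ ‖a‖_K ‖b‖_{W^{1,∞}} x^(j-1)`. In the interpolation estimate every term
`h^k |ab|_{H^j(K)}`, `j ≤ k + 1`, is therefore `≲ ‖a‖_K ‖b‖_{W^{1,∞}}`, and by the triangle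
inequality so is `‖I(ab)‖_K`. Summing the squares over the elements gives the global bound.
-/

open Finset

theorem zpow_one_sub_natCast_eq_inv_pow {G₀ : Type*} [GroupWithZero G₀] (a : G₀) {j : ℕ}
    (hj : 1 ≤ j) : a ^ ((1 : ℤ) - j) = a⁻¹ ^ (j - 1) := by
  obtain ⟨i, rfl⟩ := Nat.exists_eq_add_of_le hj
  simp [zpow_neg, inv_pow]

theorem pow_mul_inv_pow_le_one {h : ℝ} (h0 : 0 < h) (h1 : h ≤ 1) {k m : ℕ} (hm : m ≤ k) :
    h ^ k * h⁻¹ ^ m ≤ 1 := by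
  rw [← pow_sub_mul_pow h hm, mul_assoc, ← mul_pow, mul_inv_cancel₀ h0.ne', one_pow, mul_one]
  exact pow_le_one₀ h0.le h1

theorem sum_range_mul_sub_le_of_le_pow_pred {x A B : ℝ} {α β : ℕ → ℝ} {n j : ℕ}
    (hx : 1 ≤ x) (hA : 0 ≤ A) (hB : 0 ≤ B) (hβ0 : ∀ i, 0 ≤ β i)
    (hα : ∀ i ≤ n, α i ≤ A * x ^ (i - 1)) (hβ : ∀ i ≤ n, β i ≤ B * x ^ (i - 1)) (hj : j ≤ n) :
    ∑ i ∈ range (j + 1), α i * β (j - i) ≤ (j + 1) * (A * B * x ^ (j - 1)) := by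
  have hx0 : 0 ≤ x := zero_le_one.trans hx
  calc ∑ i ∈ range (j + 1), α i * β (j - i)
      ≤ ∑ _i ∈ range (j + 1), A * B * x ^ (j - 1) := by
        refine sum_le_sum fun i hi => ?_
        have hij : i ≤ j := Nat.lt_succ_iff.mp (mem_range.mp hi)
        calc α i * β (j - i) ≤ (A * x ^ (i - 1)) * (B * x ^ (j - i - 1)) :=
              mul_le_mul (hα i (hij.trans hj)) (hβ _ ((j.sub_le i).trans hj)) (hβ0 _)
                (mul_nonneg hA (pow_nonneg hx0 _))
          _ = A * B * x ^ (i - 1 + (j - i - 1)) := by ring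
          _ ≤ A * B * x ^ (j - 1) :=
            mul_le_mul_of_nonneg_left (pow_le_pow_right₀ hx (by omega)) (mul_nonneg hA hB)
    _ = (j + 1) * (A * B * x ^ (j - 1)) := by simp

theorem le_mul_inv_pow_pred_of_inverse_estimate {σ : ℕ → ℝ} {c γ h N : ℝ} {n : ℕ}
    (hcγ : c ≤ γ) (hγ : 1 ≤ γ) (h0 : 0 ≤ h) (hσ1 : 0 ≤ σ 1) (hσ0N : σ 0 ≤ N) (hσ1N : σ 1 ≤ N)
    (hinv : ∀ j, 1 ≤ j → j ≤ n → σ j ≤ c * h ^ ((1 : ℤ) - j) * σ 1) :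
    ∀ j ≤ n, σ j ≤ γ * N * h⁻¹ ^ (j - 1) := by
  have hN : 0 ≤ N := hσ1.trans hσ1N
  intro j hj
  rcases Nat.eq_zero_or_pos j with rfl | hj1
  · simpa using hσ0N.trans (le_mul_of_one_le_left hN hγ)
  calc σ j ≤ c * h⁻¹ ^ (j - 1) * σ 1 := by
        simpa only [zpow_one_sub_natCast_eq_inv_pow h hj1] using hinv j hj1 hj
    _ ≤ γ * h⁻¹ ^ (j - 1) * N := by
        have : 0 ≤ h⁻¹ ^ (j - 1) := pow_nonneg (inv_nonneg.mpr h0) _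
        gcongr
    _ = γ * N * h⁻¹ ^ (j - 1) := by ring

theorem leibniz_le_mul_inv_pow_pred {α β π : ℕ → ℝ} {c γ h W : ℝ} {n : ℕ}
    (hcγ : c ≤ γ) (hγ : 1 ≤ γ) (h0 : 0 < h) (h1 : h ≤ 1)
    (hα0 : ∀ i, 0 ≤ α i) (hβ0 : ∀ i, 0 ≤ β i) (hβ0W : β 0 ≤ W) (hβ1W : β 1 ≤ W)
    (hinvα : ∀ j, 1 ≤ j → j ≤ n → α j ≤ c * h ^ ((1 : ℤ) - j) * α 1)
    (hinvβ : ∀ j, 1 ≤ j → j ≤ n → β j ≤ c * h ^ ((1 : ℤ) - j) * β 1)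
    (hπ : ∀ j ≤ n, π j ≤ c * ∑ i ∈ range (j + 1), α i * β (j - i)) :
    ∀ j ≤ n, π j ≤ γ ^ 3 * (n + 1) * (α 0 + α 1) * W * h⁻¹ ^ (j - 1) := by
  have hx : 1 ≤ h⁻¹ := (one_le_inv₀ h0).mpr h1
  have hW : 0 ≤ W := (hβ0 1).trans hβ1W
  have hα := le_mul_inv_pow_pred_of_inverse_estimate hcγ hγ h0.le (hα0 1)
    (le_add_of_nonneg_right (hα0 1)) (le_add_of_nonneg_left (hα0 0)) hinvα
  have hβ := le_mul_inv_pow_pred_of_inverse_estimate hcγ hγ h0.le (hβ0 1) hβ0W hβ1W hinvβ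
  have hγ0 : 0 ≤ γ := zero_le_one.trans hγ
  have hA : 0 ≤ α 0 + α 1 := add_nonneg (hα0 0) (hα0 1)
  intro j hj
  have hsum := sum_range_mul_sub_le_of_le_pow_pred hx (mul_nonneg hγ0 hA) (mul_nonneg hγ0 hW)
    hβ0 hα hβ hj
  have hjn : (j : ℝ) + 1 ≤ n + 1 := by exact_mod_cast Nat.succ_le_succ hj
  calc π j ≤ γ * ∑ i ∈ range (j + 1), α i * β (j - i) :=
        (hπ j hj).trans (by gcongr; exact sum_nonneg fun i _ => mul_nonneg (hα0 i) (hβ0 _))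
    _ ≤ γ * ((j + 1) * (γ * (α 0 + α 1) * (γ * W) * h⁻¹ ^ (j - 1))) := by gcongr
    _ = γ ^ 3 * (α 0 + α 1) * W * h⁻¹ ^ (j - 1) * (j + 1) := by ring
    _ ≤ γ ^ 3 * (α 0 + α 1) * W * h⁻¹ ^ (j - 1) * (n + 1) := by gcongr
    _ = γ ^ 3 * (n + 1) * (α 0 + α 1) * W * h⁻¹ ^ (j - 1) := by ring

theorem interpolant_le_of_le_mul_inv_pow_pred {Ω : Type*} {p : ℕ → (Ω → ℝ) → ℝ}
    {φ Iφ : Ω → ℝ} {c h P : ℝ} {k : ℕ} (hc : 0 ≤ c) (h0 : 0 < h) (h1 : h ≤ 1)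
    (hp0 : ∀ j u, 0 ≤ p j u) (hpadd : ∀ j u v, p j (u + v) ≤ p j u + p j v)
    (hinterp : p 0 (Iφ - φ) + p 1 (Iφ - φ) ≤ c * h ^ k * ∑ j ∈ range (k + 2), p j φ)
    (hφ : ∀ j ≤ k + 1, p j φ ≤ P * h⁻¹ ^ (j - 1)) :
    p 0 Iφ + p 1 Iφ ≤ ((k + 2) * c + 2) * P := by
  have hP : 0 ≤ P := by simpa using (hp0 0 φ).trans (hφ 0 (Nat.zero_le _))
  have herr : p 0 (Iφ - φ) + p 1 (Iφ - φ) ≤ (k + 2) * c * P :=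
    calc p 0 (Iφ - φ) + p 1 (Iφ - φ) ≤ c * ∑ j ∈ range (k + 2), h ^ k * p j φ := by
          rwa [← mul_sum, ← mul_assoc]
      _ ≤ c * ∑ _j ∈ range (k + 2), P := by
          gcongr with j hj
          have hjk : j ≤ k + 1 := Nat.lt_succ_iff.mp (mem_range.mp hj)
          calc h ^ k * p j φ ≤ h ^ k * (P * h⁻¹ ^ (j - 1)) := by gcongr; exact hφ j hjk
            _ = P * (h ^ k * h⁻¹ ^ (j - 1)) := by ring
            _ ≤ P := mul_le_of_le_one_right hP (pow_mul_inv_pow_le_one h0 h1 (by omega))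
      _ = (k + 2) * c * P := by
          rw [sum_const, card_range, nsmul_eq_mul]; push_cast; ring
  have hφ0 : p 0 φ ≤ P := by simpa using hφ 0 (Nat.zero_le _)
  have hφ1 : p 1 φ ≤ P := by simpa using hφ 1 (by omega)
  have htri : ∀ j, p j Iφ ≤ p j (Iφ - φ) + p j φ := fun j => by
    simpa using hpadd j (Iφ - φ) φ
  linarith [htri 0, htri 1]

theorem le_mul_of_sq_eq_sum_sq {E : Type*} [Fintype E] {f g : E → ℝ} {F G t : ℝ}
    (hF : 0 ≤ F) (hG : 0 ≤ G) (hF2 : F ^ 2 = ∑ K, f K ^ 2) (hG2 : G ^ 2 = ∑ K, g K ^ 2)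
    (hf0 : ∀ K, 0 ≤ f K) (hfg : ∀ K, f K ≤ t * g K) (ht : Nonempty E → 0 ≤ t) :
    F ≤ t * G := by
  rcases isEmpty_or_nonempty E with hE | hE
  · simp only [univ_eq_empty, sum_empty, pow_eq_zero_iff two_ne_zero] at hF2 hG2
    simp [hF2, hG2]
  have hF2le : F ^ 2 ≤ (t * G) ^ 2 :=
    calc F ^ 2 ≤ ∑ K, (t * g K) ^ 2 :=
          hF2 ▸ sum_le_sum fun K _ => pow_le_pow_left₀ (hf0 K) (hfg K) 2
      _ = (t * G) ^ 2 := by rw [mul_pow, hG2, mul_sum]; simp only [mul_pow]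
  exact (pow_le_pow_iff_left₀ hF (mul_nonneg (ht hE) hG) two_ne_zero).mp hF2le

theorem product_interpolation_H1_bound_general
    (k : ℕ) (c : ℝ) :
    ∃ C : ℝ, 0 ≤ C ∧
      ∀ (Ω E : Type) (_ : Fintype E)
        (h : ℝ) (_ : 0 < h) (_ : h ≤ 1)
        (V : Submodule ℝ (Ω → ℝ)) (_ : FiniteDimensional ℝ V)
        (I : (Ω → ℝ) → (Ω → ℝ)) (_ : ∀ φ, I φ ∈ V)
        (semL2 semLinf : E → ℕ → (Ω → ℝ) → ℝ)   -- |u|_{H^j(K)} and |u|_{W^{j,∞}(K)}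
        (H1 W1inf : (Ω → ℝ) → ℝ),                -- ‖u‖_{H¹(Ω)} and ‖u‖_{W^{1,∞}(Ω)}
        (∀ (K : E) (j : ℕ) (u : Ω → ℝ), 0 ≤ semL2 K j u) →
        (∀ (K : E) (j : ℕ) (u v : Ω → ℝ),
          semL2 K j (u + v) ≤ semL2 K j u + semL2 K j v) →
        (∀ (K : E) (j : ℕ) (u : Ω → ℝ), 0 ≤ semLinf K j u) →
        (∀ u : Ω → ℝ, 0 ≤ H1 u) →
        -- global norms are assembled from the elementwise ones
        (∀ u : Ω → ℝ, H1 u ^ 2 = ∑ K : E, (semL2 K 0 u + semL2 K 1 u) ^ 2) →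
        (∀ (u : Ω → ℝ) (K : E), ∀ j ≤ 1, semLinf K j u ≤ W1inf u) →
        -- elementwise interpolation error estimate of order k
        (∀ (φ : Ω → ℝ) (K : E),
          semL2 K 0 (I φ - φ) + semL2 K 1 (I φ - φ)
            ≤ c * h ^ k * ∑ j ∈ range (k + 2), semL2 K j φ) →
        -- elementwise inverse estimates in V (L² and L^∞ based)
        (∀ v ∈ V, ∀ (K : E), ∀ j, 1 ≤ j → j ≤ k + 1 →
          semL2 K j v ≤ c * h ^ ((1 : ℤ) - j) * semL2 K 1 v) →
        (∀ v ∈ V, ∀ (K : E), ∀ j, 1 ≤ j → j ≤ k + 1 →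
          semLinf K j v ≤ c * h ^ ((1 : ℤ) - j) * semLinf K 1 v) →
        -- Leibniz rule for Sobolev seminorms of products
        (∀ (a b : Ω → ℝ) (K : E), ∀ j ≤ k + 1,
          semL2 K j (a * b)
            ≤ c * ∑ i ∈ range (j + 1), semL2 K i a * semLinf K (j - i) b) →
        ∀ a ∈ V, ∀ b ∈ V, H1 (I (a * b)) ≤ C * H1 a * W1inf b := by
  have hcγ : c ≤ max c 1 := le_max_left c 1
  have hγ : 1 ≤ max c 1 := le_max_right c 1
  refine ⟨((k + 2) * max c 1 + 2) * (max c 1 ^ 3 * (k + 2)), by positivity, ?_⟩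
  intro Ω E _ h h0 h1 V _ I _ semL2 semLinf H1 W1inf hL2nn hL2add hLinfnn hH1nn hH1sq hW
    hinterp hinvL2 hinvLinf hLeib a ha b hb
  have hprod : ∀ K, ∀ j ≤ k + 1, semL2 K j (a * b) ≤
      max c 1 ^ 3 * ((k + 1 : ℕ) + 1) * (semL2 K 0 a + semL2 K 1 a) * W1inf b * h⁻¹ ^ (j - 1) :=
    fun K => leibniz_le_mul_inv_pow_pred hcγ hγ h0 h1 (hL2nn K · a) (hLinfnn K · b)
      (hW b K 0 zero_le_one) (hW b K 1 le_rfl) (hinvL2 a ha K) (hinvLinf b hb K) (hLeib a b K)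
  have hinterpγ : ∀ K, semL2 K 0 (I (a * b) - a * b) + semL2 K 1 (I (a * b) - a * b) ≤
      max c 1 * h ^ k * ∑ j ∈ range (k + 2), semL2 K j (a * b) := fun K =>
    (hinterp (a * b) K).trans (by gcongr; exact sum_nonneg fun j _ => hL2nn K j _)
  rw [mul_right_comm]
  refine le_mul_of_sq_eq_sum_sq (hH1nn _) (hH1nn a) (hH1sq _) (hH1sq a)
    (fun K => add_nonneg (hL2nn K 0 _) (hL2nn K 1 _)) (fun K => ?_)
    (fun ⟨K⟩ => mul_nonneg (by positivity) ((hLinfnn K 0 b).trans (hW b K 0 zero_le_one)))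
  refine (interpolant_le_of_le_mul_inv_pow_pred (by positivity) h0 h1 (hL2nn K) (hL2add K)
    (hinterpγ K) (hprod K)).trans_eq ?_
  push_cast
  ring

/-- **Product interpolation bound, discrete model; Lemma 5.3.**
Let `V ⊂ C(Ω) ∩ H¹(Ω)` be a finite-dimensional (finite element) space on a bounded domain `Ω`
partitioned into elements `E`, with interpolation operator `I : C(Ω) → V` satisfying the
elementwise error estimate `‖Iϕ − ϕ‖_{H¹(K)} ≤ c h^k ‖ϕ‖_{H^{k+1}(K)}`, together with inverse
estimates `|v|_{H^j(K)} ≤ c h^{−j+1} |v|_{H^1(K)}` (and their `L^∞` analogues) for `v ∈ V`,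
`j ≤ k+1`, and the Leibniz product rule for Sobolev seminorms. The global norms satisfy
`‖u‖_{H¹(Ω)}² = ∑_K ‖u‖_{H¹(K)}²` and `|u|_{W^{j,∞}(K)} ≤ ‖u‖_{W^{1,∞}(Ω)}` for `j ≤ 1`.
Then there is `C`, independent of the mesh size `h`, such that for all `a, b ∈ V`:
`‖I(ab)‖_{H¹(Ω)} ≤ C ‖a‖_{H¹(Ω)} ‖b‖_{W^{1,∞}(Ω)}`. -/
theorem product_interpolation_H1_bound
    (k : ℕ) (hk : 1 ≤ k) (c : ℝ) (hc : 0 < c) :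
    ∃ C : ℝ, 0 ≤ C ∧
      ∀ (Ω E : Type) (_ : Fintype E)
        (h : ℝ) (_ : 0 < h) (_ : h ≤ 1)
        (V : Submodule ℝ (Ω → ℝ)) (_ : FiniteDimensional ℝ V)
        (I : (Ω → ℝ) → (Ω → ℝ)) (_ : ∀ φ, I φ ∈ V)
        (semL2 semLinf : E → ℕ → (Ω → ℝ) → ℝ)   -- |u|_{H^j(K)} and |u|_{W^{j,∞}(K)}
        (H1 W1inf : (Ω → ℝ) → ℝ),                -- ‖u‖_{H¹(Ω)} and ‖u‖_{W^{1,∞}(Ω)}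
        (∀ (K : E) (j : ℕ) (u : Ω → ℝ), 0 ≤ semL2 K j u) →
        (∀ (K : E) (j : ℕ) (u v : Ω → ℝ),
          semL2 K j (u + v) ≤ semL2 K j u + semL2 K j v) →
        (∀ (K : E) (j : ℕ) (u : Ω → ℝ), 0 ≤ semLinf K j u) →
        (∀ u : Ω → ℝ, 0 ≤ H1 u) →
        -- global norms are assembled from the elementwise ones
        (∀ u : Ω → ℝ, H1 u ^ 2 = ∑ K : E, (semL2 K 0 u + semL2 K 1 u) ^ 2) →
        (∀ (u : Ω → ℝ) (K : E), ∀ j ≤ 1, semLinf K j u ≤ W1inf u) →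
        -- elementwise interpolation error estimate of order k
        (∀ (φ : Ω → ℝ) (K : E),
          semL2 K 0 (I φ - φ) + semL2 K 1 (I φ - φ)
            ≤ c * h ^ k * ∑ j ∈ range (k + 2), semL2 K j φ) →
        -- elementwise inverse estimates in V (L² and L^∞ based)
        (∀ v ∈ V, ∀ (K : E), ∀ j, 1 ≤ j → j ≤ k + 1 →
          semL2 K j v ≤ c * h ^ ((1 : ℤ) - j) * semL2 K 1 v) →
        (∀ v ∈ V, ∀ (K : E), ∀ j, 1 ≤ j → j ≤ k + 1 →
          semLinf K j v ≤ c * h ^ ((1 : ℤ) - j) * semLinf K 1 v) →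
        -- Leibniz rule for Sobolev seminorms of products
        (∀ (a b : Ω → ℝ) (K : E), ∀ j ≤ k + 1,
          semL2 K j (a * b)
            ≤ c * ∑ i ∈ range (j + 1), semL2 K i a * semLinf K (j - i) b) →
        ∀ a ∈ V, ∀ b ∈ V, H1 (I (a * b)) ≤ C * H1 a * W1inf b :=
  product_interpolation_H1_bound_general k c
end
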